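/- RLT_y equals the convex hull of the four points (y, y₁y₂) for y ∈ {0,1}²; that is, RLT_y = conv{((0,0),0), ((1,0),0), ((0,1),0), ((1,1),1)} as a subset of ℝ² × ℝ. -/
import Mathlib


/-- RLT_y = {(y, Y₁₂) : max{0, y₁+y₂−1} ≤ Y₁₂ ≤ min{y₁, y₂}} equals the convex
hull of the four points (y, y₁y₂) for y ∈ {0,1}². -/
theorem stmt16 :
    {p : (ℝ × ℝ) × ℝ | max 0 (p.1.1 + p.1.2 - 1) ≤ p.2 ∧ p.2 ≤ min p.1.1 p.1.2} =
      convexHull ℝ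
        ({((0, 0), 0), ((1, 0), 0), ((0, 1), 0), ((1, 1), 1)} : Set ((ℝ × ℝ) × ℝ)) := by
  apply Set.Subset.antisymm
  · rintro ⟨⟨x, y⟩, z⟩ ⟨h1, h2⟩
    simp only [max_le_iff, le_min_iff] at h1 h2
    obtain ⟨hz0, hz1⟩ := h1
    obtain ⟨hzx, hzy⟩ := h2
    have key : (((x, y), z) : (ℝ × ℝ) × ℝ) =
        Finset.univ.centerMass (![1 - x - y + z, x - z, y - z, z])
          (![((0, 0), 0), ((1, 0), 0), ((0, 1), 0), ((1, 1), 1)]) := by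
      rw [Finset.centerMass]
      rw [show ∑ i, (![1 - x - y + z, x - z, y - z, z]) i = 1 by
        simp [Fin.sum_univ_four]; ring]
      simp [Fin.sum_univ_four, Prod.ext_iff]
    rw [key]
    apply Finset.centerMass_mem_convexHull
    · intro i _
      fin_cases i <;> simp <;> linarith
    · rw [show ∑ i ∈ Finset.univ, (![1 - x - y + z, x - z, y - z, z]) i = 1 by
        simp [Fin.sum_univ_four]; ring]
      norm_num
    · intro i _
      fin_cases i <;> simp
  · apply convexHull_min
    · rintro p hp
      simp only [Set.mem_insert_iff, Set.mem_singleton_iff] at hp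
      rcases hp with h | h | h | h <;> subst h <;> constructor <;> norm_num
    · rintro ⟨⟨x1, y1⟩, z1⟩ ⟨h1, h2⟩ ⟨⟨x2, y2⟩, z2⟩ ⟨h3, h4⟩ a b ha hb hab
      simp only [max_le_iff, le_min_iff, Set.mem_setOf_eq] at *
      obtain ⟨hz1, hw1⟩ := h1
      obtain ⟨hz2, hw2⟩ := h3
      obtain ⟨hx1, hy1⟩ := h2
      obtain ⟨hx2, hy2⟩ := h4
      refine ⟨⟨?_, ?_⟩, ?_, ?_⟩ <;> simp [Prod.smul_def, smul_eq_mul] <;> nlinarith
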